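/- If S is an invertible n×n equiangular matrix with parameter α ∈ (0,1) and s'_i denotes the i-th row of S⁻¹, then the cosine of the angle between the i-th column s_i of S and the vector s'_iᵀ equals 1/√β, where β = (1+(n-2)α)/((1-α)(1+(n-1)α)). -/

import Mathlib

open Matrix
open scoped RealInnerProductSpace

noncomputable def Gmat (n : ℕ) (α : ℝ) : Matrix (Fin n) (Fin n) ℝ :=
  (1 - α) • (1 : Matrix (Fin n) (Fin n) ℝ) + α • (Matrix.of fun _ _ => (1 : ℝ))

noncomputable def invRow (n : ℕ) (S : Matrix (Fin n) (Fin n) ℝ) (i : Fin n) :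
    EuclideanSpace ℝ (Fin n) :=
  (WithLp.equiv 2 (Fin n → ℝ)).symm (fun k => S⁻¹ i k)

/-- The `i`-th column of `S`, as a vector of Euclidean space. -/
noncomputable def colVec (n : ℕ) (S : Matrix (Fin n) (Fin n) ℝ) (i : Fin n) :
    EuclideanSpace ℝ (Fin n) :=
  (WithLp.equiv 2 (Fin n → ℝ)).symm (fun k => S k i)

/-!
The three quantities in the cosine are diagonal entries of Gram matrices:
`⟪s_i, s'_i⟫ = (S⁻¹ S)ᵢᵢ = 1`, `‖s_i‖² = (SᵀS)ᵢᵢ = 1` and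
`‖s'_i‖² = (S⁻¹ S⁻ᵀ)ᵢᵢ = ((SᵀS)⁻¹)ᵢᵢ`. Since `J² = n J`, the inverse of `G = (1 - α) I + α J`
is again of the form `c I + d J`, and its diagonal entry `c + d` is `β`.
-/

theorem inner_colVec_invRow (n : ℕ) (S : Matrix (Fin n) (Fin n) ℝ) (hS : IsUnit S.det)
    (i : Fin n) : ⟪colVec n S i, invRow n S i⟫ = 1 := by
  have h := congrFun (congrFun (nonsing_inv_mul S hS) i) i
  simp only [mul_apply, one_apply_eq] at h
  simpa [colVec, invRow, PiLp.inner_apply, mul_comm] using h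

theorem norm_colVec_sq (n : ℕ) (S : Matrix (Fin n) (Fin n) ℝ) (i : Fin n) :
    ‖colVec n S i‖ ^ 2 = (Sᵀ * S) i i := by
  rw [EuclideanSpace.norm_sq_eq]
  simp [colVec, mul_apply, sq]

theorem norm_invRow_sq (n : ℕ) (S : Matrix (Fin n) (Fin n) ℝ) (i : Fin n) :
    ‖invRow n S i‖ ^ 2 = (Sᵀ * S)⁻¹ i i := by
  rw [Matrix.mul_inv_rev, ← transpose_nonsing_inv, EuclideanSpace.norm_sq_eq]
  simp [invRow, mul_apply, sq]

theorem ones_mul_ones {ι R : Type*} [Fintype ι] [NonAssocSemiring R] :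
    (of fun _ _ => (1 : R) : Matrix ι ι R) * of (fun _ _ => 1)
      = (Fintype.card ι : R) • of fun _ _ => 1 := by
  ext i j
  simp [mul_apply]

theorem Gmat_apply_self (n : ℕ) (α : ℝ) (i : Fin n) : Gmat n α i i = 1 := by
  simp [Gmat]

theorem Gmat_inv (n : ℕ) (α : ℝ) (hα : α ≠ 1) (hG : 1 + ((n : ℝ) - 1) * α ≠ 0) :
    (Gmat n α)⁻¹ = (1 / (1 - α)) • (1 : Matrix (Fin n) (Fin n) ℝ)
      - (α / ((1 - α) * (1 + ((n : ℝ) - 1) * α))) • of fun _ _ => (1 : ℝ) := by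
  have h1 : (1 : ℝ) - α ≠ 0 := sub_ne_zero.mpr hα.symm
  apply inv_eq_right_inv
  simp only [Gmat, add_mul, mul_sub, smul_mul_smul_comm, Matrix.one_mul, Matrix.mul_one,
    mul_smul, ones_mul_ones, Fintype.card_fin]
  have hI : (1 - α) * (1 / (1 - α)) = 1 := by field_simp
  have hJ : α * (1 / (1 - α)) - ((1 - α) * (α / ((1 - α) * (1 + ((n : ℝ) - 1) * α)))
      + α * (α / ((1 - α) * (1 + ((n : ℝ) - 1) * α))) * n) = 0 := by
    generalize ht : 1 + ((n : ℝ) - 1) * α = t at hG ⊢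
    field_simp
    linear_combination (-α) * ht
  linear_combination (norm := module)
    hI • (1 : Matrix (Fin n) (Fin n) ℝ) + hJ • of fun _ _ => (1 : ℝ)

theorem Gmat_inv_apply_self (n : ℕ) (α : ℝ) (hα : α ≠ 1) (hG : 1 + ((n : ℝ) - 1) * α ≠ 0)
    (i : Fin n) :
    (Gmat n α)⁻¹ i i = (1 + ((n : ℝ) - 2) * α) / ((1 - α) * (1 + ((n : ℝ) - 1) * α)) := by
  have h1 : (1 : ℝ) - α ≠ 0 := sub_ne_zero.mpr hα.symm
  rw [Gmat_inv n α hα hG]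
  simp only [Matrix.sub_apply, Matrix.smul_apply, one_apply_eq, of_apply, smul_eq_mul, mul_one]
  generalize ht : 1 + ((n : ℝ) - 1) * α = t at hG ⊢
  field_simp
  linear_combination -ht

theorem stmt6_general (n : ℕ) (α : ℝ) (hα₁ : 0 < α) (hα₂ : α < 1)
    (S : Matrix (Fin n) (Fin n) ℝ) (hS : IsUnit S.det)
    (hEq : Sᵀ * S = Gmat n α) (i : Fin n) :
    ⟪colVec n S i, invRow n S i⟫ / (‖colVec n S i‖ * ‖invRow n S i‖)
      = 1 / Real.sqrt ((1 + ((n : ℝ) - 2) * α)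
          / ((1 - α) * (1 + ((n : ℝ) - 1) * α))) := by
  have hn : (1 : ℝ) ≤ n := Nat.one_le_cast.mpr i.pos
  have hG : 1 + ((n : ℝ) - 1) * α ≠ 0 := by positivity [sub_nonneg.mpr hn]
  have hcol : ‖colVec n S i‖ = 1 := by
    rw [← pow_eq_one_iff_of_nonneg (norm_nonneg _) two_ne_zero, norm_colVec_sq, hEq,
      Gmat_apply_self]
  have hrow : ‖invRow n S i‖ = Real.sqrt ((1 + ((n : ℝ) - 2) * α)
      / ((1 - α) * (1 + ((n : ℝ) - 1) * α))) := by
    rw [← Gmat_inv_apply_self n α hα₂.ne hG i, ← hEq, ← norm_invRow_sq,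
      Real.sqrt_sq (norm_nonneg _)]
  rw [inner_colVec_invRow n S hS i, hcol, hrow, one_mul]

/-- The cosine of the angle between the `i`-th column `s_i` of `S` and the
(transpose of the) `i`-th row `s'_i` of `S⁻¹` equals `1/√β`. -/
theorem stmt6 (n : ℕ) (hn : 2 ≤ n) (α : ℝ) (hα₁ : 0 < α) (hα₂ : α < 1)
    (S : Matrix (Fin n) (Fin n) ℝ) (hS : IsUnit S.det)
    (hEq : Sᵀ * S = Gmat n α) (i : Fin n) :
    ⟪colVec n S i, invRow n S i⟫ / (‖colVec n S i‖ * ‖invRow n S i‖)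
      = 1 / Real.sqrt ((1 + ((n : ℝ) - 2) * α)
          / ((1 - α) * (1 + ((n : ℝ) - 1) * α))) :=
  stmt6_general n α hα₁ hα₂ S hS hEq i
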